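/- Let n ≥ 3 and let W n be the normalized n-qubit W-state. Then for every processor p : Fin n, W n admits a symmetric move for the singleton S = {p}: for every orthonormal basis e : Fin 2 → EuclideanSpace ℂ (Fin 2) of ℂ² there exists l : Fin 2 with coeff (W n) e (fun i => if i = p then l else 1 - l) ≠ 0. -/

import Mathlib

/-- Coefficient of `ψ` on the product basis vector `⊗ᵢ e (f i)`. -/
noncomputable def coeff {n : ℕ} (ψ : (Fin n → Fin 2) → ℂ)
    (e : Fin 2 → EuclideanSpace ℂ (Fin 2)) (f : Fin n → Fin 2) : ℂ :=
  ∑ x : Fin n → Fin 2, (∏ i, star ((e (f i)) (x i))) * ψ x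

/-- The normalized `n`-qubit W-state: amplitude `1/√n` on computational-basis
strings with exactly one `1`, and `0` elsewhere. -/
noncomputable def Wstate (n : ℕ) : (Fin n → Fin 2) → ℂ := fun x =>
  if (Finset.univ.filter fun i => x i = 1).card = 1 then (1 / Real.sqrt n : ℂ) else 0

open Finset

private lemma fin2_eq_zero (a : Fin 2) (h : a ≠ 1) : a = 0 := by fin_cases a <;> simp_all

private lemma coeff_Wstate {n : ℕ} (e : Fin 2 → EuclideanSpace ℂ (Fin 2)) (f : Fin n → Fin 2) :
    coeff (Wstate n) e f
      = (1 / Real.sqrt n : ℂ) *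
          ∑ j : Fin n, ∏ i, star (e (f i) (if i = j then (1:Fin 2) else 0)) := by
  classical
  unfold coeff Wstate
  have h1 : ∀ x : Fin n → Fin 2,
      (∏ i, star (e (f i) (x i))) *
        (if (Finset.univ.filter fun i => x i = 1).card = 1 then (1 / Real.sqrt n : ℂ) else 0)
      = if (Finset.univ.filter fun i => x i = 1).card = 1
          then (∏ i, star (e (f i) (x i))) * (1 / Real.sqrt n : ℂ) else 0 := by
    intro x; split <;> simp
  simp only [h1]
  rw [← Finset.sum_filter]
  have himg : (Finset.univ.filter
      fun x : Fin n → Fin 2 => (Finset.univ.filter fun i => x i = 1).card = 1)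
      = Finset.image (fun j : Fin n => (fun i => if i = j then (1:Fin 2) else 0)) Finset.univ := by
    ext x
    simp only [mem_filter, mem_univ, true_and, mem_image]
    constructor
    · intro hx
      obtain ⟨j, hj⟩ := Finset.card_eq_one.mp hx
      refine ⟨j, ?_⟩
      funext i
      by_cases hij : i = j
      · subst hij
        have hm : i ∈ ({i} : Finset (Fin n)) := mem_singleton_self i
        rw [← hj] at hm
        simp only [mem_filter] at hm
        simp [hm.2]
      · have hm : i ∉ ({j} : Finset (Fin n)) := by simp [hij]
        rw [← hj] at hm
        simp only [mem_filter, mem_univ, true_and] at hm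
        have hx0 : x i = 0 := fin2_eq_zero _ hm
        simp [hij, hx0]
    · rintro ⟨j, rfl⟩
      have : (Finset.univ.filter fun i => (if i = j then (1:Fin 2) else 0) = 1) = {j} := by
        ext i; simp only [mem_filter, mem_univ, true_and, mem_singleton]
        constructor
        · intro h; by_contra hij; simp [hij] at h
        · intro h; simp [h]
      rw [this, Finset.card_singleton]
  rw [himg]
  rw [Finset.sum_image ?_]
  · rw [Finset.mul_sum]
    congr 1
    funext j
    ring
  · intro j _ j' _ hjj
    have := congrFun hjj j
    by_contra hne
    simp [hne] at this

private lemma sum_eval {n : ℕ} (p : Fin n) (e : Fin 2 → EuclideanSpace ℂ (Fin 2)) (a b : Fin 2) :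
    ∑ j : Fin n, ∏ i, star (e ((if i = p then a else b)) (if i = j then (1:Fin 2) else 0))
      = star (e a 1) * star (e b 0) ^ (n-1)
        + (n - 1 : ℕ) * (star (e a 0) * (star (e b 1) * star (e b 0) ^ (n-2))) := by
  classical
  rw [← Finset.add_sum_erase _ _ (mem_univ p)]
  have hcard : (univ.erase p).card = n - 1 := by
    rw [Finset.card_erase_of_mem (mem_univ p), Finset.card_univ, Fintype.card_fin]
  congr 1
  · rw [← Finset.mul_prod_erase _ _ (mem_univ p)]
    have h1 : ∀ i ∈ univ.erase p,
        star (e (if i = p then a else b) (if i = p then (1:Fin 2) else 0)) = star (e b 0) := by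
      intro i hi
      rw [if_neg (Finset.ne_of_mem_erase hi), if_neg (Finset.ne_of_mem_erase hi)]
    rw [Finset.prod_congr rfl h1, Finset.prod_const, hcard, if_pos rfl, if_pos rfl]
  · have hterm : ∀ j ∈ univ.erase p,
        (∏ i, star (e ((if i = p then a else b)) (if i = j then (1:Fin 2) else 0)))
        = star (e a 0) * (star (e b 1) * star (e b 0) ^ (n-2)) := by
      intro j hj
      have hjp : j ≠ p := Finset.ne_of_mem_erase hj
      rw [← Finset.mul_prod_erase _ _ (mem_univ p), ← Finset.mul_prod_erase _ _ hj]
      have h2 : ∀ i ∈ (univ.erase p).erase j,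
          star (e (if i = p then a else b) (if i = j then (1:Fin 2) else 0)) = star (e b 0) := by
        intro i hi
        rw [if_neg (Finset.ne_of_mem_erase (Finset.mem_of_mem_erase hi)),
          if_neg (Finset.ne_of_mem_erase hi)]
      rw [Finset.prod_congr rfl h2, Finset.prod_const,
        Finset.card_erase_of_mem hj, hcard]
      have : n - 1 - 1 = n - 2 := by omega
      rw [this, if_pos rfl, if_neg (fun h : p = j => hjp h.symm), if_neg hjp, if_pos rfl]
    rw [Finset.sum_congr rfl hterm, Finset.sum_const, hcard, nsmul_eq_mul]

private lemma core (n : ℕ) (hn : 3 ≤ n) (A0 A1 B0 B1 : ℂ)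
    (h0 : A0 * star A0 + B0 * star B0 = 1)
    (h1 : A1 * star A1 + B1 * star B1 = 1)
    (hor : A0 * star A1 + B0 * star B1 = 0)
    (hS0 : B0 * A1 ^ (n-1) + ((n-1:ℕ):ℂ) * (A0 * (B1 * A1 ^ (n-2))) = 0)
    (hS1 : B1 * A0 ^ (n-1) + ((n-1:ℕ):ℂ) * (A1 * (B0 * A0 ^ (n-2))) = 0) : False := by
  set k : ℂ := ((n-1:ℕ):ℂ) with hk
  have hk0 : k ≠ 0 := by
    rw [hk]; exact Nat.cast_ne_zero.mpr (by omega)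
  have hm : n - 2 ≠ 0 := by omega
  have hrw : n - 1 = (n - 2) + 1 := by omega
  rw [hrw, pow_succ] at hS0 hS1
  have f0 : A1 ^ (n-2) * (B0 * A1 + k * (A0 * B1)) = 0 := by linear_combination hS0
  have f1 : A0 ^ (n-2) * (B1 * A0 + k * (A1 * B0)) = 0 := by linear_combination hS1
  by_cases hA1 : A1 = 0
  · have hB1 : B1 ≠ 0 := by
      intro hb; rw [hA1, hb] at h1; simp at h1
    have hB0 : B0 = 0 := by
      have h' : B0 * star B1 = 0 := by
        rw [hA1] at hor; simpa using hor
      rcases mul_eq_zero.mp h' with h | h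
      · exact h
      · exact absurd (star_eq_zero.mp h) hB1
    have hA0 : A0 ≠ 0 := by
      intro ha; rw [ha, hB0] at h0; simp at h0
    rw [hA1, hB0] at hS1
    have : B1 * (A0 ^ (n-2) * A0) = 0 := by linear_combination hS1
    rcases mul_eq_zero.mp this with h | h
    · exact hB1 h
    · rcases mul_eq_zero.mp h with h' | h'
      · exact hA0 (pow_eq_zero_iff hm |>.mp h')
      · exact hA0 h'
  by_cases hA0 : A0 = 0
  · have hB0 : B0 ≠ 0 := by
      intro hb; rw [hA0, hb] at h0; simp at h0
    have g0 : B0 * A1 + k * (A0 * B1) = 0 := by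
      rcases mul_eq_zero.mp f0 with h | h
      · exact absurd (pow_eq_zero_iff hm |>.mp h) hA1
      · exact h
    rw [hA0] at g0
    have : B0 * A1 = 0 := by linear_combination g0
    rcases mul_eq_zero.mp this with h | h
    · exact hB0 h
    · exact hA1 h
  have g0 : B0 * A1 + k * (A0 * B1) = 0 := by
    rcases mul_eq_zero.mp f0 with h | h
    · exact absurd (pow_eq_zero_iff hm |>.mp h) hA1
    · exact h
  have g1 : B1 * A0 + k * (A1 * B0) = 0 := by
    rcases mul_eq_zero.mp f1 with h | h
    · exact absurd (pow_eq_zero_iff hm |>.mp h) hA0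
    · exact h
  have e0 : B0 * A1 = -(k * (A0 * B1)) := by linear_combination g0
  have e1 : B1 * A0 = -(k * (A1 * B0)) := by linear_combination g1
  have prod : (k^2 - 1) * (A0 * A1 * B0 * B1) = 0 := by
    have : (B0 * A1) * (B1 * A0) = (-(k * (A0 * B1))) * (-(k * (A1 * B0))) := by
      rw [e0, e1]
    linear_combination -this
  have hk2 : k^2 - 1 ≠ 0 := by
    have h2 : 2 ≤ n - 1 := by omega
    have hle : 1 ≤ (n-1)^2 := by nlinarith
    have : k^2 - 1 = (((n-1)^2 - 1 : ℕ) : ℂ) := by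
      rw [hk]; push_cast [Nat.cast_sub hle]; ring
    rw [this]
    exact Nat.cast_ne_zero.mpr (by
      have h4 : 4 ≤ (n-1)^2 := by nlinarith
      omega)
  have ht : A0 * A1 * B0 * B1 = 0 := by
    rcases mul_eq_zero.mp prod with h | h
    · exact absurd h hk2
    · exact h
  have hB : B0 = 0 ∨ B1 = 0 := by
    rcases mul_eq_zero.mp ht with h | h
    · rcases mul_eq_zero.mp h with h' | h'
      · rcases mul_eq_zero.mp h' with h'' | h''
        · exact absurd h'' hA0
        · exact absurd h'' hA1
      · exact Or.inl h'
    · exact Or.inr h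
  have hB0B1 : B0 = 0 ∧ B1 = 0 := by
    rcases hB with h | h
    · refine ⟨h, ?_⟩
      rw [h] at g0
      have : k * (A0 * B1) = 0 := by linear_combination g0
      rcases mul_eq_zero.mp this with h' | h'
      · exact absurd h' hk0
      · rcases mul_eq_zero.mp h' with h'' | h''
        · exact absurd h'' hA0
        · exact h''
    · refine ⟨?_, h⟩
      rw [h] at g1
      have : k * (A1 * B0) = 0 := by linear_combination g1
      rcases mul_eq_zero.mp this with h' | h'
      · exact absurd h' hk0
      · rcases mul_eq_zero.mp h' with h'' | h''
        · exact absurd h'' hA1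
        · exact h''
  rw [hB0B1.1] at hor
  have : A0 * star A1 = 0 := by linear_combination hor
  rcases mul_eq_zero.mp this with h | h
  · exact hA0 h
  · exact hA1 (star_eq_zero.mp h)

theorem Wstate_singleton_symmetric_move {n : ℕ} (hn : 3 ≤ n) (p : Fin n) :
    ∀ e : OrthonormalBasis (Fin 2) ℂ (EuclideanSpace ℂ (Fin 2)),
      ∃ l : Fin 2,
        coeff (Wstate n) (fun j => e j) (fun i => if i = p then l else 1 - l) ≠ 0 := by
  intro e
  by_contra hcon
  push_neg at hcon
  have key : ∀ a b : Fin 2,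
      coeff (Wstate n) (fun j => e j) (fun i => if i = p then a else b)
        = (1 / Real.sqrt n : ℂ) *
            (star ((e a : EuclideanSpace ℂ (Fin 2)) 1)
                * star ((e b : EuclideanSpace ℂ (Fin 2)) 0) ^ (n-1)
              + (n - 1 : ℕ) * (star ((e a : EuclideanSpace ℂ (Fin 2)) 0)
                * (star ((e b : EuclideanSpace ℂ (Fin 2)) 1)
                    * star ((e b : EuclideanSpace ℂ (Fin 2)) 0) ^ (n-2)))) := by
    intro a b
    rw [coeff_Wstate, sum_eval]
  have hc : (1 / Real.sqrt n : ℂ) ≠ 0 := by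
    have hs : (0:ℝ) < Real.sqrt n := Real.sqrt_pos.mpr (by
      exact_mod_cast Nat.pos_of_ne_zero (by omega))
    exact one_div_ne_zero (Complex.ofReal_ne_zero.mpr hs.ne')
  have h0 := hcon 0
  have h1 := hcon 1
  have e01 : (fun i : Fin n => if i = p then (0:Fin 2) else 1 - 0)
      = (fun i : Fin n => if i = p then (0:Fin 2) else 1) := by
    funext i; split <;> rfl
  have e10 : (fun i : Fin n => if i = p then (1:Fin 2) else 1 - 1)
      = (fun i : Fin n => if i = p then (1:Fin 2) else 0) := by
    funext i; split <;> rfl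
  rw [e01, key 0 1] at h0
  rw [e10, key 1 0] at h1
  have hS0 := (mul_eq_zero.mp h0).resolve_left hc
  have hS1 := (mul_eq_zero.mp h1).resolve_left hc
  have horth := orthonormal_iff_ite.mp e.orthonormal
  have hn0 := horth 0 0
  have hn1 := horth 1 1
  have hor := horth 0 1
  simp only [if_pos rfl] at hn0 hn1
  rw [PiLp.inner_apply] at hn0 hn1 hor
  simp only [RCLike.inner_apply, Fin.sum_univ_two] at hn0 hn1 hor
  rw [if_neg (by decide : ¬ (0:Fin 2) = 1)] at hor
  exact core n hn
    (star ((e 0 : EuclideanSpace ℂ (Fin 2)) 0))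
    (star ((e 1 : EuclideanSpace ℂ (Fin 2)) 0))
    (star ((e 0 : EuclideanSpace ℂ (Fin 2)) 1))
    (star ((e 1 : EuclideanSpace ℂ (Fin 2)) 1))
    (by simp [star_star] at hn0 ⊢; linear_combination hn0)
    (by simp [star_star] at hn1 ⊢; linear_combination hn1)
    (by simp [star_star] at hor ⊢; linear_combination hor)
    hS0 hS1
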